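/- arXiv:1804.07630 — 11 statements merged into one kernel-verified Lean document; each statement's English description precedes it below -/
import Mathlib

section
/- Let (G, X, 0) be an expansive pointed dynamical system with expansivity constant Δ > 0, let Y be a metric space, and let f : X → Y be a continuous function. Then for every ε > 0 and every δ with 0 < δ ≤ Δ, there exists a finite set N ⊆ G such that for all x, y ∈ X, if d(g·x, g·y) ≤ δ for all g ∈ N, then d_Y(f(x), f(y)) < ε. -/
/-!
By expansivity, the closed sets `{(x, y) | dist (g • x) (g • y) ≤ δ}`, `g : G`, intersect in the
diagonal, which lies in the open set `{(x, y) | dist (f x) (f y) < ε}`. Compactness of `X × X`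
then lets finitely many of them suffice.
-/

open Set

theorem exists_finset_biInter_subset_of_iInter_subset {X ι : Type*} [TopologicalSpace X]
    [CompactSpace X] {C : ι → Set X} (hC : ∀ i, IsClosed (C i)) {U : Set X} (hU : IsOpen U)
    (h : ⋂ i, C i ⊆ U) : ∃ N : Finset ι, ⋂ i ∈ N, C i ⊆ U := by
  obtain ⟨N, hN⟩ := hU.isClosed_compl.isCompact.elim_finite_subfamily_closed C hC
    (by rwa [inter_comm, ← sdiff_eq, sdiff_eq_empty])
  exact ⟨N, by rwa [inter_comm, ← sdiff_eq, sdiff_eq_empty] at hN⟩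

theorem statement0_general {G X Y : Type} [Group G] [MetricSpace X] [CompactSpace X]
    [MulAction G X] [MetricSpace Y]
    (hcont : ∀ g : G, Continuous fun x : X => g • x)
    (Δ : ℝ)
    (hexp : ∀ x y : X, (∀ g : G, dist (g • x) (g • y) ≤ Δ) → x = y)
    (f : X → Y) (hf : Continuous f)
    (ε : ℝ) (hε : 0 < ε) (δ : ℝ) (hδΔ : δ ≤ Δ) :
    ∃ N : Finset G, ∀ x y : X,
      (∀ g ∈ N, dist (g • x) (g • y) ≤ δ) → dist (f x) (f y) < ε := by
  have hC (g : G) : IsClosed {p : X × X | dist (g • p.1) (g • p.2) ≤ δ} :=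
    isClosed_le (((hcont g).comp continuous_fst).dist ((hcont g).comp continuous_snd))
      continuous_const
  have hU : IsOpen {p : X × X | dist (f p.1) (f p.2) < ε} :=
    isOpen_lt ((hf.comp continuous_fst).dist (hf.comp continuous_snd)) continuous_const
  have hsub : ⋂ g : G, {p : X × X | dist (g • p.1) (g • p.2) ≤ δ} ⊆
      {p | dist (f p.1) (f p.2) < ε} := by
    rintro ⟨x, y⟩ hxy
    simp only [mem_iInter, mem_ofPred_eq] at hxy
    obtain rfl := hexp x y fun g => (hxy g).trans hδΔ
    simpa using hε
  obtain ⟨N, hN⟩ := exists_finset_biInter_subset_of_iInter_subset hC hU hsub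
  exact ⟨N, fun x y hxy => @hN (x, y) (by simpa using hxy)⟩

/-- In an expansive pointed dynamical system `(G, X, 0)` with expansivity
constant `Δ`, for every continuous `f : X → Y`, every `ε > 0` and every `0 < δ ≤ Δ`,
there is a finite set `N ⊆ G` such that points that are `δ`-close along `N` have
`f`-images `ε`-close. -/
theorem statement0 {G X Y : Type} [Group G] [MetricSpace X] [CompactSpace X]
    [MulAction G X] [MetricSpace Y]
    (hcont : ∀ g : G, Continuous fun x : X => g • x)
    (x₀ : X) (hx₀ : ∀ g : G, g • x₀ = x₀)
    (Δ : ℝ) (hΔ : 0 < Δ)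
    (hexp : ∀ x y : X, (∀ g : G, dist (g • x) (g • y) ≤ Δ) → x = y)
    (f : X → Y) (hf : Continuous f)
    (ε : ℝ) (hε : 0 < ε) (δ : ℝ) (hδ : 0 < δ) (hδΔ : δ ≤ Δ) :
    ∃ N : Finset G, ∀ x y : X,
      (∀ g ∈ N, dist (g • x) (g • y) ≤ δ) → dist (f x) (f y) < ε :=
  statement0_general hcont Δ hexp f hf ε hε δ hδΔ
end

section
/- Let (G, X, 0) be an expansive pointed dynamical system with expansivity constant Δ > 0. For each finite set F ⊆ G and each δ with 0 < δ ≤ Δ/2, the set Y = { x ∈ X : Θ(δ, x) ⊆ F } is finite, where Θ(δ, x) = { g ∈ G : d(g·x, 0) > δ } is the δ-shadow of x. -/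
/-!
Outside `F` the images of two points of `Y` are both `δ`-close to the base point, hence within
`2δ ≤ Δ` of each other; by expansivity, distinct points of `Y` are therefore `Δ`-apart after
applying some `g ∈ F`. As `F` is finite and the action continuous, this makes `Y` discrete.
Since `Y` is also closed in the compact space `X`, it is finite.
-/

open Filter Topology

section Shadow

variable {G X : Type*} [SMul G X] [PseudoMetricSpace X]

/-- The paper's `Θ(δ, x)`, relative to the base point `x₀`. -/
def shadow (x₀ : X) (δ : ℝ) (x : X) : Set G := {g | δ < dist (g • x) x₀}

lemma dist_smul_le_of_shadow_subset {x₀ x : X} {δ : ℝ} {F : Set G} {g : G}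
    (hx : shadow x₀ δ x ⊆ F) (hg : g ∉ F) : dist (g • x) x₀ ≤ δ :=
  not_lt.1 fun h => hg (hx h)

lemma isClosed_setOf_shadow_subset (hcont : ∀ g : G, Continuous fun x : X => g • x)
    (x₀ : X) (δ : ℝ) (F : Set G) : IsClosed {x : X | shadow x₀ δ x ⊆ F} := by
  have hY : {x : X | shadow x₀ δ x ⊆ F} = ⋂ g ∈ Fᶜ, {x | dist (g • x) x₀ ≤ δ} := by
    ext x
    simp [shadow, Set.subset_def, not_imp_comm]
  rw [hY]
  exact isClosed_biInter fun g _ => isClosed_le ((hcont g).dist continuous_const) continuous_const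

lemma exists_lt_dist_smul_of_shadow_subset {Δ δ : ℝ}
    (hexp : ∀ x y : X, (∀ g : G, dist (g • x) (g • y) ≤ Δ) → x = y) (hδΔ : δ ≤ Δ / 2)
    {x₀ x y : X} {F : Set G} (hx : shadow x₀ δ x ⊆ F) (hy : shadow x₀ δ y ⊆ F) (hxy : x ≠ y) :
    ∃ g ∈ F, Δ < dist (g • x) (g • y) := by
  by_contra! hclose
  refine hxy (hexp x y fun g => ?_)
  by_cases hg : g ∈ F
  · exact hclose g hg
  · calc dist (g • x) (g • y) ≤ dist (g • x) x₀ + dist (g • y) x₀ := dist_triangle_right _ _ _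
      _ ≤ δ + δ := add_le_add (dist_smul_le_of_shadow_subset hx hg)
          (dist_smul_le_of_shadow_subset hy hg)
      _ ≤ Δ := by linarith

lemma isDiscrete_of_exists_lt_dist_smul
    (hcont : ∀ g : G, Continuous fun x : X => g • x) {F : Finset G} {Δ : ℝ} (hΔ : 0 < Δ)
    {Y : Set X} (hsep : ∀ x ∈ Y, ∀ y ∈ Y, x ≠ y → ∃ g ∈ F, Δ < dist (g • x) (g • y)) :
    IsDiscrete Y := by
  refine IsDiscrete.of_nhdsWithin fun x hx => le_pure_iff.2 ?_
  have hU : (⋂ g ∈ F, (g • ·) ⁻¹' Metric.ball (g • x) Δ) ∈ 𝓝 x :=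
    (biInter_finset_mem F).2 fun g _ =>
      (hcont g).continuousAt.preimage_mem_nhds (Metric.ball_mem_nhds _ hΔ)
  filter_upwards [nhdsWithin_le_nhds hU, self_mem_nhdsWithin] with y hyU hy
  by_contra hne
  obtain ⟨g, hg, hfar⟩ := hsep x hx y hy (Ne.symm hne)
  have hnear : dist (g • y) (g • x) < Δ := Set.mem_iInter₂.1 hyU g hg
  linarith [dist_comm (g • x) (g • y)]

end Shadow

theorem statement1_general {G X : Type} [Group G] [MetricSpace X] [CompactSpace X]
    [MulAction G X]
    (hcont : ∀ g : G, Continuous fun x : X => g • x)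
    (x₀ : X)
    (Δ : ℝ) (hΔ : 0 < Δ)
    (hexp : ∀ x y : X, (∀ g : G, dist (g • x) (g • y) ≤ Δ) → x = y)
    (F : Finset G) (δ : ℝ) (hδΔ : δ ≤ Δ / 2) :
    {x : X | ∀ g : G, δ < dist (g • x) x₀ → g ∈ F}.Finite := by
  exact (isClosed_setOf_shadow_subset hcont x₀ δ F).isCompact.finite
    (isDiscrete_of_exists_lt_dist_smul hcont hΔ fun _ hx _ hy =>
      exists_lt_dist_smul_of_shadow_subset hexp hδΔ hx hy)

/-- In an expansive pointed dynamical system `(G, X, 0)` with expansivity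
constant `Δ`, for every finite `F ⊆ G` and `0 < δ ≤ Δ/2`, the set of points whose
`δ`-shadow `{g | dist (g • x) 0 > δ}` is contained in `F` is finite. -/
theorem statement1 {G X : Type} [Group G] [MetricSpace X] [CompactSpace X]
    [MulAction G X]
    (hcont : ∀ g : G, Continuous fun x : X => g • x)
    (x₀ : X) (hx₀ : ∀ g : G, g • x₀ = x₀)
    (Δ : ℝ) (hΔ : 0 < Δ)
    (hexp : ∀ x y : X, (∀ g : G, dist (g • x) (g • y) ≤ Δ) → x = y)
    (F : Finset G) (δ : ℝ) (hδ : 0 < δ) (hδΔ : δ ≤ Δ / 2) :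
    {x : X | ∀ g : G, δ < dist (g • x) x₀ → g ∈ F}.Finite :=
  statement1_general hcont x₀ Δ hΔ hexp F δ hδΔ
end

section
/- Let (G, X, 0) be an expansive pointed dynamical system, let f : X → X be an endomorphism, and let Y ⊆ X be a closed G-invariant subset. If f is weakly nilpotent on Y, i.e. for every y ∈ Y there exists n ∈ ℕ with fⁿ(y) = 0, then f is nilpotent on Y, i.e. there exists n ∈ ℕ such that fⁿ(y) = 0 for all y ∈ Y. -/
/-!
Suppose `f` is not nilpotent on `Y`. By Zorn's lemma there is a minimal closed invariant `C ⊆ Y`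
on which `f` is not nilpotent: if `f^[n]` killed the intersection of a chain, then by compactness
`f^[n]` would map some member of the chain into `ball x₀ Δ`, and on an invariant set expansivity
upgrades this to `f^[n] = x₀`. By Baire, `C` has a nonempty relatively open piece `C ∩ U` killed
by some `f^[n]`. Its `G`-saturation `V` is open and still killed by `f^[n]`, while `C \ V` is a
proper closed invariant subset of `C`, hence nilpotent by minimality. So `f` is nilpotent on
`C = (C \ V) ∪ (C ∩ V)`, a contradiction.
-/

open Set Function Metric

def IsNilpotentOn {X : Type*} (f : X → X) (x₀ : X) (C : Set X) : Prop :=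
  ∃ n, ∀ y ∈ C, f^[n] y = x₀

section Iterate

variable {X : Type*} {f : X → X} {x₀ : X}

theorem iterate_eq_of_le (hf₀ : f x₀ = x₀) {y : X} {m n : ℕ} (hmn : m ≤ n)
    (hm : f^[m] y = x₀) : f^[n] y = x₀ := by
  obtain ⟨k, rfl⟩ := Nat.exists_eq_add_of_le hmn
  rw [add_comm, iterate_add_apply, hm, iterate_fixed hf₀]

theorem IsNilpotentOn.union (hf₀ : f x₀ = x₀) {A B : Set X} (hA : IsNilpotentOn f x₀ A)
    (hB : IsNilpotentOn f x₀ B) : IsNilpotentOn f x₀ (A ∪ B) := by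
  obtain ⟨m, hm⟩ := hA
  obtain ⟨n, hn⟩ := hB
  refine ⟨max m n, ?_⟩
  rintro y (hy | hy)
  · exact iterate_eq_of_le hf₀ (le_max_left m n) (hm y hy)
  · exact iterate_eq_of_le hf₀ (le_max_right m n) (hn y hy)

end Iterate

section Saturation

variable {G X : Type*} [Group G] [MulAction G X] {C U : Set X}

theorem IsInvariant.diff_iUnion_preimage_smul (hC : IsInvariant (· • · : G → X → X) C)
    (U : Set X) : IsInvariant (· • · : G → X → X) (C \ ⋃ g : G, (g • ·) ⁻¹' U) := by
  rintro h y ⟨hyC, hyV⟩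
  refine ⟨hC h hyC, fun hhy => hyV ?_⟩
  obtain ⟨g, hg⟩ := mem_iUnion.1 hhy
  exact mem_iUnion.2 ⟨g * h, by simpa [mul_smul] using hg⟩

theorem IsNilpotentOn.inter_iUnion_preimage_smul {f : X → X} {x₀ : X}
    (hfeq : ∀ (g : G) (x : X), f (g • x) = g • f x) (hx₀ : ∀ g : G, g • x₀ = x₀)
    (hC : IsInvariant (· • · : G → X → X) C) (hU : IsNilpotentOn f x₀ (C ∩ U)) :
    IsNilpotentOn f x₀ (C ∩ ⋃ g : G, (g • ·) ⁻¹' U) := by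
  obtain ⟨n, hn⟩ := hU
  refine ⟨n, fun y ⟨hyC, hyV⟩ => ?_⟩
  obtain ⟨g, hg⟩ := mem_iUnion.1 hyV
  rw [← hx₀ g⁻¹, eq_inv_smul_iff, ← Function.Commute.iterate_left (hfeq g) n y]
  exact hn _ ⟨hC g hyC, hg⟩

end Saturation

section Topology

variable {X : Type*} [TopologicalSpace X]

theorem IsChain.exists_subset_of_sInter_subset [CompactSpace X] {c : Set (Set X)}
    (hc : IsChain (· ⊆ ·) c) (hne : c.Nonempty) (hcl : ∀ s ∈ c, IsClosed s) {W : Set X}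
    (hW : IsOpen W) (h : ⋂₀ c ⊆ W) : ∃ s ∈ c, s ⊆ W := by
  have : Nonempty c := hne.to_subtype
  have hdir : Directed (· ⊇ ·) (fun s : c => (s : Set X)) := fun a b =>
    (hc.total a.2 b.2).elim (fun hab => ⟨a, subset_rfl, hab⟩)
      fun hba => ⟨b, hba, subset_rfl⟩
  obtain ⟨s, hs⟩ := exists_subset_nhds_of_isCompact' (V := fun s : c => (s : Set X))
    hdir (fun s => (hcl s s.2).isCompact) (fun s => hcl s s.2)
    (fun x hx => hW.mem_nhds (h (by rwa [sInter_eq_iInter])))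
  exact ⟨s, s.2, hs⟩

theorem exists_isOpen_isNilpotentOn_inter [CompactSpace X] [T2Space X] {f : X → X} {x₀ : X}
    (hf : Continuous f) {C : Set X} (hC : IsClosed C) (hne : C.Nonempty)
    (hweak : ∀ y ∈ C, ∃ n, f^[n] y = x₀) :
    ∃ U, IsOpen U ∧ (C ∩ U).Nonempty ∧ IsNilpotentOn f x₀ (C ∩ U) := by
  have : CompactSpace C := isCompact_iff_compactSpace.1 hC.isCompact
  have : Nonempty C := hne.to_subtype
  set Z : ℕ → Set C := fun n => {y | f^[n] y = x₀}
  obtain ⟨n, ⟨x, hxC⟩, hx⟩ := nonempty_interior_of_iUnion_of_closed (f := Z)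
    (fun n => isClosed_eq ((hf.iterate n).comp continuous_subtype_val) continuous_const)
    (eq_univ_of_forall fun y => mem_iUnion.2 (hweak y y.2))
  obtain ⟨U, hU, hUint⟩ := isOpen_induced_iff.1 (isOpen_interior (s := Z n))
  refine ⟨U, hU, ⟨x, hxC, by rwa [← hUint] at hx⟩, n, fun y ⟨hyC, hyU⟩ => ?_⟩
  have : (⟨y, hyC⟩ : C) ∈ interior (Z n) := by rwa [← hUint]
  exact interior_subset (s := Z n) this

end Topology

section Expansive

variable {G X : Type*} [Group G] [MulAction G X] [MetricSpace X] {f : X → X} {x₀ : X} {Δ : ℝ}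

theorem iterate_eq_of_mapsTo_ball
    (hexp : ∀ x y : X, (∀ g : G, dist (g • x) (g • y) ≤ Δ) → x = y)
    (hx₀ : ∀ g : G, g • x₀ = x₀) (hfeq : ∀ (g : G) (x : X), f (g • x) = g • f x)
    {C : Set X} (hC : IsInvariant (· • · : G → X → X) C) {n : ℕ}
    (h : MapsTo f^[n] C (ball x₀ Δ)) {y : X} (hy : y ∈ C) : f^[n] y = x₀ :=
  hexp _ _ fun g => by
    rw [hx₀, ← Function.Commute.iterate_left (hfeq g) n y]
    exact (mem_ball.1 (h (hC g hy))).le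

theorem exists_minimal_not_isNilpotentOn [CompactSpace X]
    (hexp : ∀ x y : X, (∀ g : G, dist (g • x) (g • y) ≤ Δ) → x = y)
    (hx₀ : ∀ g : G, g • x₀ = x₀) (hfeq : ∀ (g : G) (x : X), f (g • x) = g • f x)
    (hf : Continuous f) (hΔ : 0 < Δ) {Y : Set X} (hY : IsClosed Y)
    (hYinv : IsInvariant (· • · : G → X → X) Y) (hYnil : ¬ IsNilpotentOn f x₀ Y) :
    ∃ C ⊆ Y, Minimal (fun C => IsClosed C ∧ IsInvariant (· • · : G → X → X) C ∧
      ¬ IsNilpotentOn f x₀ C) C := by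
  refine zorn_superset_nonempty
    {C | IsClosed C ∧ IsInvariant (· • · : G → X → X) C ∧ ¬ IsNilpotentOn f x₀ C}
    (fun c hcS hc hne => ⟨⋂₀ c, ⟨?_, ?_, ?_⟩, fun s => sInter_subset_of_mem⟩)
    Y ⟨hY, hYinv, hYnil⟩
  · exact isClosed_sInter fun s hs => (hcS hs).1
  · exact fun g y hy => mem_sInter.2 fun s hs => (hcS hs).2.1 g (mem_sInter.1 hy s hs)
  · rintro ⟨n, hn⟩
    obtain ⟨s, hs, hsW⟩ := hc.exists_subset_of_sInter_subset hne (fun s hs => (hcS hs).1)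
      (isOpen_ball.preimage (hf.iterate n)) fun y hy => by
        rw [mem_preimage, hn y hy]; exact mem_ball_self hΔ
    exact (hcS hs).2.2 ⟨n, fun y => iterate_eq_of_mapsTo_ball hexp hx₀ hfeq (hcS hs).2.1 hsW⟩

end Expansive

/-- In an expansive pointed dynamical system `(G, X, 0)`, if an
endomorphism `f` is weakly nilpotent on a closed `G`-invariant subset `Y ⊆ X`,
then it is nilpotent on `Y`. -/
theorem statement2 {G X : Type} [Group G] [MetricSpace X] [CompactSpace X]
    [MulAction G X]
    (hcont : ∀ g : G, Continuous fun x : X => g • x)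
    (x₀ : X) (hx₀ : ∀ g : G, g • x₀ = x₀)
    (Δ : ℝ) (hΔ : 0 < Δ)
    (hexp : ∀ x y : X, (∀ g : G, dist (g • x) (g • y) ≤ Δ) → x = y)
    (f : X → X) (hf : Continuous f) (hf₀ : f x₀ = x₀)
    (hfeq : ∀ (g : G) (x : X), f (g • x) = g • f x)
    (Y : Set X) (hYclosed : IsClosed Y)
    (hYinv : ∀ (g : G), ∀ y ∈ Y, g • y ∈ Y)
    (hweak : ∀ y ∈ Y, ∃ n : ℕ, f^[n] y = x₀) :
    ∃ n : ℕ, ∀ y ∈ Y, f^[n] y = x₀ := by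
  have : ContinuousConstSMul G X := ⟨hcont⟩
  by_contra hYnil
  obtain ⟨C, hCY, hCmin⟩ :=
    exists_minimal_not_isNilpotentOn hexp hx₀ hfeq hf hΔ hYclosed hYinv hYnil
  obtain ⟨hCcl, hCinv, hCnil⟩ := hCmin.prop
  have hCne : C.Nonempty := nonempty_iff_ne_empty.2 fun hC => hCnil ⟨0, by simp [hC]⟩
  obtain ⟨U, hU, ⟨x, hxC, hxU⟩, hUnil⟩ :=
    exists_isOpen_isNilpotentOn_inter hf hCcl hCne fun y hy => hweak y (hCY hy)
  set V := ⋃ g : G, (g • ·) ⁻¹' U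
  have hVopen : IsOpen V := isOpen_iUnion fun g => hU.preimage (continuous_const_smul g)
  have hDnil : IsNilpotentOn f x₀ (C \ V) := by
    by_contra hDnil
    have hCD := hCmin.le_of_le
      ⟨hCcl.sdiff hVopen, hCinv.diff_iUnion_preimage_smul U, hDnil⟩ sdiff_subset
    exact (hCD hxC).2 (mem_iUnion.2 ⟨1, by simpa using hxU⟩)
  apply hCnil
  rw [← sdiff_union_inter C V]
  exact hDnil.union hf₀ (hUnil.inter_iUnion_preimage_smul hfeq hx₀ hCinv)
end

section
/- Let G be a group generated by a finite set S, and let (G, X, 0) be a pointed dynamical system with the shadowing property. Then (G, X, 0) is 0-gluing. -/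
/-!
Paste a `(δ, S ∪ S⁻¹)`-designation `(A_i, x_i)` into the map `c g = g • x_i` for `g ∈ A_i`.
Along an edge `g ↦ s * g` inside one piece, `c` is an exact orbit. Along an edge leaving a piece,
`g` and `s * g` both lie on borders, so `c g` and `c (s * g)` are close to the fixed point, and
by continuity of the generators at the fixed point so is `s • c g`. Hence `c` is a pseudo-orbit,
and a point shadowing it is an `ε`-realization of the designation.
-/

open Filter Topology
open scoped Pointwise

/-- A pointed system `(G, X, x₀)` is `0`-gluing: for every `ε > 0` there are `δ > 0`
and a finite `E ⊆ G` such that every `(δ, E)`-designation `(A_i, p_i)_{i ∈ I}`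
(the `A_i` partition `G`, and every point of the `E`-border of `A_i` sees `p_i`
`δ`-close to `x₀`) has an `ε`-realization. -/
def ZeroGluing (G : Type) [Group G] {X : Type} [MetricSpace X] [MulAction G X]
    (x₀ : X) : Prop :=
  ∀ ε : ℝ, 0 < ε → ∃ δ : ℝ, 0 < δ ∧ ∃ E : Finset G,
    ∀ (I : Type) (A : I → Set G) (p : I → X),
      (∀ g : G, ∃! i : I, g ∈ A i) →
      (∀ i : I, ∀ g ∈ A i, (∃ e ∈ E, e * g ∉ A i) → dist (g • p i) x₀ < δ) →
      ∃ y : X, ∀ i : I, ∀ g ∈ A i, dist (g • y) (g • p i) < ε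

lemma exists_forall_mem_iff_eq_of_existsUnique {G I : Type*} {A : I → Set G}
    (hA : ∀ g, ∃! i, g ∈ A i) : ∃ σ : G → I, ∀ g i, g ∈ A i ↔ σ g = i := by
  choose σ hσ using hA
  exact ⟨σ, fun g i => ⟨fun h => ((hσ g).2 i h).symm, fun h => h ▸ (hσ g).1⟩⟩

section PseudoOrbit

variable {G X : Type*} [Group G] [MetricSpace X] [MulAction G X]

def IsPseudoOrbit (S : Finset G) (δ : ℝ) (c : G → X) : Prop :=
  ∀ g, ∀ s ∈ S, dist (s • c g) (c (s * g)) < δ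

lemma exists_pos_forall_dist_smul_lt {x₀ : X} (T : Finset G)
    (hcont : ∀ g ∈ T, ContinuousAt (fun x : X => g • x) x₀) (hx₀ : ∀ g ∈ T, g • x₀ = x₀)
    {η : ℝ} (hη : 0 < η) :
    ∃ δ > 0, ∀ g ∈ T, ∀ a, dist a x₀ < δ → dist (g • a) x₀ < η := by
  have hnear : ∀ᶠ a in 𝓝 x₀, ∀ g ∈ T, dist (g • a) x₀ < η :=
    eventually_all_finset T |>.2 fun g hg => by
      simpa [hx₀ g hg] using (hcont g hg).eventually (Metric.ball_mem_nhds _ hη)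
  obtain ⟨δ, hδ, h⟩ := Metric.eventually_nhds_iff.1 hnear
  exact ⟨δ, hδ, fun g hg a ha => h ha g hg⟩

lemma isPseudoOrbit_of_dist_border_lt [DecidableEq G] {I : Type*} {S : Finset G} {x₀ : X} {δ η : ℝ}
    (hδ : 0 < δ) (hS : ∀ s ∈ S, ∀ a, dist a x₀ < η → dist (s • a) x₀ < δ / 2)
    (σ : G → I) (p : I → X)
    (hborder : ∀ g, ∀ s ∈ S ∪ S⁻¹, σ (s * g) ≠ σ g → dist (g • p (σ g)) x₀ < min η (δ / 2)) :
    IsPseudoOrbit S δ fun g => g • p (σ g) := by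
  intro g s hs
  by_cases hσ : σ (s * g) = σ g
  · simpa [hσ, smul_smul] using hδ
  have hg := hborder g s (Finset.mem_union_left _ hs) hσ
  have hsg := hborder (s * g) s⁻¹ (Finset.mem_union_right _ (Finset.inv_mem_inv hs))
    (by simpa [eq_comm] using hσ)
  calc dist (s • g • p (σ g)) ((s * g) • p (σ (s * g)))
      ≤ dist (s • g • p (σ g)) x₀ + dist ((s * g) • p (σ (s * g))) x₀ := dist_triangle_right _ _ _
    _ < δ / 2 + δ / 2 :=
      add_lt_add (hS s hs _ (hg.trans_le (min_le_left _ _))) (hsg.trans_le (min_le_right _ _))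
    _ = δ := add_halves δ

end PseudoOrbit

theorem statement3_general {G X : Type} [Group G] [MetricSpace X]
    [MulAction G X]
    (hcont : ∀ g : G, Continuous fun x : X => g • x)
    (x₀ : X) (hx₀ : ∀ g : G, g • x₀ = x₀)
    (S : Finset G)
    (hshadow : ∀ ε : ℝ, 0 < ε → ∃ δ : ℝ, 0 < δ ∧
      ∀ c : G → X, (∀ (g : G), ∀ s ∈ S, dist (s • c g) (c (s * g)) < δ) →
        ∃ y : X, ∀ g : G, dist (c g) (g • y) < ε) :
    ZeroGluing G x₀ := by
  classical
  intro ε hε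
  obtain ⟨δ, hδ, hsh⟩ := hshadow ε hε
  obtain ⟨η, hη, hSη⟩ := exists_pos_forall_dist_smul_lt S
    (fun g _ => (hcont g).continuousAt) (fun g _ => hx₀ g) (half_pos hδ)
  refine ⟨min η (δ / 2), lt_min hη (half_pos hδ), S ∪ S⁻¹, fun I A p hpart hborder => ?_⟩
  obtain ⟨σ, hσ⟩ := exists_forall_mem_iff_eq_of_existsUnique hpart
  have hc : IsPseudoOrbit S δ fun g => g • p (σ g) :=
    isPseudoOrbit_of_dist_border_lt hδ hSη σ p fun g s hs hne =>
      hborder (σ g) g ((hσ g _).2 rfl) ⟨s, hs, fun h => hne ((hσ _ _).1 h)⟩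
  obtain ⟨y, hy⟩ := hsh _ hc
  exact ⟨y, fun i g hg => by rw [dist_comm, ← (hσ g i).1 hg]; exact hy g⟩

/-- a pointed dynamical system over a finitely generated group with the
shadowing property is `0`-gluing. -/
theorem statement3 {G X : Type} [Group G] [MetricSpace X] [CompactSpace X]
    [MulAction G X]
    (hcont : ∀ g : G, Continuous fun x : X => g • x)
    (x₀ : X) (hx₀ : ∀ g : G, g • x₀ = x₀)
    (S : Finset G) (hS : Subgroup.closure (S : Set G) = ⊤)
    (hshadow : ∀ ε : ℝ, 0 < ε → ∃ δ : ℝ, 0 < δ ∧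
      ∀ c : G → X, (∀ (g : G), ∀ s ∈ S, dist (s • c g) (c (s * g)) < δ) →
        ∃ y : X, ∀ g : G, dist (c g) (g • y) < ε) :
    ZeroGluing G x₀ :=
  statement3_general hcont x₀ hx₀ S hshadow
end

section
/- Let (G, X, 0_X) and (G, Y, 0_Y) be pointed dynamical systems over the same group G, and let π : X → Y be a surjective continuous map with π(g·x) = g·π(x) for all g ∈ G, x ∈ X, with π(0_X) = 0_Y, and with π⁻¹(0_Y) = {0_X}. If (G, X, 0_X) is 0-gluing, then so is (G, Y, 0_Y). -/
/-!
Lift the pieces of a `(δ, E)`-designation in `Y` to `X` through `π`. Since `X` is compact and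
the fibre of `π` over `0_Y` is `{0_X}`, points whose image is close to `0_Y` are themselves close
to `0_X`, so the lift is a designation in `X`; project an `ε'`-realization of it back to `Y`,
with `ε'` a modulus of uniform continuity of `π` for `ε`.
-/

open Metric

theorem exists_pos_forall_dist_lt_of_preimage_eq_singleton {X Y : Type*} [PseudoMetricSpace X]
    [CompactSpace X] [MetricSpace Y] {π : X → Y} (hπ : Continuous π) {x₀ : X} {y₀ : Y}
    (hfib : π ⁻¹' {y₀} = {x₀}) {δ : ℝ} (hδ : 0 < δ) :
    ∃ η > 0, ∀ x, dist (π x) y₀ < η → dist x x₀ < δ := by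
  set K := {x : X | δ ≤ dist x x₀}
  have hK : IsCompact K :=
    (isClosed_le continuous_const (continuous_id.dist continuous_const)).isCompact
  have hy₀ : y₀ ∉ π '' K := by
    rintro ⟨x, hxK, hx⟩
    have : x = x₀ := by simpa [hfib] using show x ∈ π ⁻¹' {y₀} from hx
    exact (not_le.mpr hδ) (by simpa [K, this] using hxK)
  obtain ⟨η, hη, hball⟩ :=
    isOpen_iff.mp (hK.image hπ).isClosed.isOpen_compl y₀ hy₀
  exact ⟨η, hη, fun x hx => not_le.mp fun hxK => hball (mem_ball.mpr hx) ⟨x, hxK, rfl⟩⟩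

theorem ZeroGluing.of_surjective_equivariant {G X Y : Type} [Group G]
    [MetricSpace X] [MulAction G X] [MetricSpace Y] [MulAction G Y] {x₀ : X} {y₀ : Y}
    {π : X → Y} (hπu : UniformContinuous π) (hπs : Function.Surjective π)
    (hπeq : ∀ (g : G) (x : X), π (g • x) = g • π x)
    (hnear : ∀ δ > 0, ∃ η > 0, ∀ x, dist (π x) y₀ < η → dist x x₀ < δ)
    (hX : ZeroGluing G x₀) : ZeroGluing G y₀ := by
  intro ε hε
  obtain ⟨ε', hε', hπε⟩ := uniformContinuous_iff.mp hπu ε hε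
  obtain ⟨δ, hδ, E, hE⟩ := hX ε' hε'
  obtain ⟨η, hη, hπδ⟩ := hnear δ hδ
  refine ⟨η, hη, E, fun I A q hpart hborder => ?_⟩
  choose p hp using fun i => hπs (q i)
  have hlift : ∀ i, ∀ g ∈ A i, (∃ e ∈ E, e * g ∉ A i) → dist (g • p i) x₀ < δ :=
    fun i g hg he => hπδ _ (by rw [hπeq, hp]; exact hborder i g hg he)
  obtain ⟨x, hx⟩ := hE I A p hpart hlift
  refine ⟨π x, fun i g hg => ?_⟩
  simpa only [hπeq, hp] using hπε (hx i g hg)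

theorem statement4_general {G X Y : Type} [Group G]
    [MetricSpace X] [CompactSpace X] [MulAction G X]
    [MetricSpace Y] [MulAction G Y]
    (x₀ : X)
    (y₀ : Y)
    (π : X → Y) (hπc : Continuous π) (hπs : Function.Surjective π)
    (hπeq : ∀ (g : G) (x : X), π (g • x) = g • π x)
    (hfib : π ⁻¹' {y₀} = {x₀})
    (hX : ZeroGluing G x₀) :
    ZeroGluing G y₀ :=
  hX.of_surjective_equivariant (CompactSpace.uniformContinuous_of_continuous hπc) hπs hπeq
    fun _ hδ => exists_pos_forall_dist_lt_of_preimage_eq_singleton hπc hfib hδ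

/-- the `0`-gluing property passes to factors `π : X → Y` with
`π⁻¹(0_Y) = {0_X}`. -/
theorem statement4 {G X Y : Type} [Group G]
    [MetricSpace X] [CompactSpace X] [MulAction G X]
    [MetricSpace Y] [CompactSpace Y] [MulAction G Y]
    (hcontX : ∀ g : G, Continuous fun x : X => g • x)
    (hcontY : ∀ g : G, Continuous fun y : Y => g • y)
    (x₀ : X) (hx₀ : ∀ g : G, g • x₀ = x₀)
    (y₀ : Y) (hy₀ : ∀ g : G, g • y₀ = y₀)
    (π : X → Y) (hπc : Continuous π) (hπs : Function.Surjective π)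
    (hπeq : ∀ (g : G) (x : X), π (g • x) = g • π x)
    (hπ0 : π x₀ = y₀) (hfib : π ⁻¹' {y₀} = {x₀})
    (hX : ZeroGluing G x₀) :
    ZeroGluing G y₀ :=
  statement4_general x₀ y₀ π hπc hπs hπeq hfib hX
end

section
/- Let (G, X, 0) be an expansive pointed dynamical system with expansivity constant Δ > 0, and let 0 < ε ≤ Δ/4. Let (A_i, x_i)_{i∈I} and (B_i, x_i)_{i∈I} be two designations in (G, X, 0) with the same index set and the same points, such that for each i ∈ I one has d(g·x_i, 0) < ε for all g ∈ G \ (A_i ∩ B_i). If y ∈ X is an ε-realization of (A_i, x_i)_{i∈I} and z ∈ X is an ε-realization of (B_i, x_i)_{i∈I}, then y = z. -/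
/-!
At each `g ∈ G` pick the indices `i`, `j` with `g ∈ A i` and `g ∈ B j`. If `i = j`, then `g • y`
and `g • z` are both `ε`-close to `g • p i`. If `i ≠ j`, then `g` lies outside `A i ∩ B i` and
outside `A j ∩ B j`, so `g • p i` and `g • p j` are both `ε`-close to the fixed point, and
`g • y`, `g • z` are joined by a path of four `ε`-steps. Either way `d(g • y, g • z) < 4ε ≤ Δ`
for every `g`, and expansivity gives `y = z`.
-/

lemma dist_lt_two_mul_of_dist_lt {X : Type*} [PseudoMetricSpace X] {y z a : X} {ε : ℝ}
    (hy : dist y a < ε) (hz : dist z a < ε) : dist y z < 2 * ε := by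
  linarith [dist_triangle_right y z a]

lemma dist_lt_four_mul_of_dist_lt {X : Type*} [PseudoMetricSpace X] {y z a b c : X} {ε : ℝ}
    (hy : dist y a < ε) (hz : dist z b < ε) (ha : dist a c < ε) (hb : dist b c < ε) :
    dist y z < 4 * ε := by
  linarith [dist_triangle4 y a c z, dist_triangle_right c z b, dist_comm b c]

lemma dist_smul_lt_of_realizations {G X I : Type*} [SMul G X] [PseudoMetricSpace X]
    {A B : I → Set G} {p : I → X} {x₀ y z : X} {ε : ℝ}
    (hpartA : ∀ g : G, ∃! i : I, g ∈ A i) (hpartB : ∀ g : G, ∃! i : I, g ∈ B i)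
    (hsmall : ∀ i : I, ∀ g : G, g ∉ A i ∩ B i → dist (g • p i) x₀ < ε)
    (hy : ∀ i : I, ∀ g ∈ A i, dist (g • y) (g • p i) < ε)
    (hz : ∀ i : I, ∀ g ∈ B i, dist (g • z) (g • p i) < ε) (g : G) :
    dist (g • y) (g • z) < 4 * ε := by
  obtain ⟨i, hgA, hA_unique⟩ := hpartA g
  obtain ⟨j, hgB, hB_unique⟩ := hpartB g
  have hyi := hy i g hgA
  have hzj := hz j g hgB
  by_cases hij : i = j
  · subst hij
    have hε : 0 < ε := dist_nonneg.trans_lt hyi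
    linarith [dist_lt_two_mul_of_dist_lt hyi hzj]
  · have hgBi : g ∉ B i := fun h => hij (hB_unique i h)
    have hgAj : g ∉ A j := fun h => hij (hA_unique j h).symm
    exact dist_lt_four_mul_of_dist_lt hyi hzj (hsmall i g fun h => hgBi h.2)
      (hsmall j g fun h => hgAj h.1)

theorem statement6_general {G X : Type} [Group G] [MetricSpace X]
    [MulAction G X]
    (x₀ : X)
    (Δ : ℝ)
    (hexp : ∀ x y : X, (∀ g : G, dist (g • x) (g • y) ≤ Δ) → x = y)
    (ε : ℝ) (hεΔ : ε ≤ Δ / 4)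
    (I : Type) (A B : I → Set G) (p : I → X)
    (hpartA : ∀ g : G, ∃! i : I, g ∈ A i)
    (hpartB : ∀ g : G, ∃! i : I, g ∈ B i)
    (hsmall : ∀ i : I, ∀ g : G, g ∉ A i ∩ B i → dist (g • p i) x₀ < ε)
    (y z : X)
    (hy : ∀ i : I, ∀ g ∈ A i, dist (g • y) (g • p i) < ε)
    (hz : ∀ i : I, ∀ g ∈ B i, dist (g • z) (g • p i) < ε) :
    y = z :=
  hexp y z fun g => by
    linarith [dist_smul_lt_of_realizations hpartA hpartB hsmall hy hz g]

/-- in an expansive pointed system with expansivity constant `Δ`, for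
`0 < ε ≤ Δ/4`, if two designations `(A_i, p_i)` and `(B_i, p_i)` share their points,
and each `p_i` is `ε`-close to `0` along all of `G \ (A_i ∩ B_i)`, then any
`ε`-realizations of the two designations are equal. -/
theorem statement6 {G X : Type} [Group G] [MetricSpace X] [CompactSpace X]
    [MulAction G X]
    (hcont : ∀ g : G, Continuous fun x : X => g • x)
    (x₀ : X) (hx₀ : ∀ g : G, g • x₀ = x₀)
    (Δ : ℝ) (hΔ : 0 < Δ)
    (hexp : ∀ x y : X, (∀ g : G, dist (g • x) (g • y) ≤ Δ) → x = y)
    (ε : ℝ) (hε : 0 < ε) (hεΔ : ε ≤ Δ / 4)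
    (I : Type) (A B : I → Set G) (p : I → X)
    (hpartA : ∀ g : G, ∃! i : I, g ∈ A i)
    (hpartB : ∀ g : G, ∃! i : I, g ∈ B i)
    (hsmall : ∀ i : I, ∀ g : G, g ∉ A i ∩ B i → dist (g • p i) x₀ < ε)
    (y z : X)
    (hy : ∀ i : I, ∀ g ∈ A i, dist (g • y) (g • p i) < ε)
    (hz : ∀ i : I, ∀ g ∈ B i, dist (g • z) (g • p i) < ε) :
    y = z :=
  statement6_general x₀ Δ hexp ε hεΔ I A B p hpartA hpartB hsmall y z hy hz
end

section
/- Let (G, X, 0) be an expansive pointed dynamical system and let f : X → X be an endomorphism. Then there exists ε₀ > 0 (depending only on the system and f) such that for every ε with 0 < ε ≤ ε₀ and every designation (A_i, x_i)_{i∈I} in (G, X, 0): if y ∈ X is an ε-realization of (A_i, x_i)_{i∈I} and z ∈ X is an ε-realization of (A_i, f(x_i))_{i∈I}, then z = f(y). -/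
/-! Realizations of a designation and of its image under `f` agree, on the piece `A i` containing
`g`, with `g • p i` and `g • f (p i) = f (g • p i)` up to `ε`. Uniform continuity of `f` turns the
first closeness into closeness of `g • f y` and `g • f (p i)`, so `g • z` and `g • f y` stay within
the expansivity constant for every `g`, and expansivity forces `z = f y`. -/

theorem UniformContinuous.exists_pos_dist_lt_of_dist_lt {X Y : Type*} [PseudoMetricSpace X]
    [PseudoMetricSpace Y] {f : X → Y} (hf : UniformContinuous f) {Δ : ℝ} (hΔ : 0 < Δ) :
    ∃ ε₀ > 0, ∀ y p : X, ∀ z : Y, dist y p < ε₀ → dist z (f p) < ε₀ → dist z (f y) < Δ := by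
  obtain ⟨δ, hδ, hδf⟩ := Metric.uniformContinuous_iff.mp hf (Δ / 2) (by linarith)
  refine ⟨min δ (Δ / 2), lt_min hδ (by linarith), fun y p z hyp hzp => ?_⟩
  have hfp : dist (f p) (f y) < Δ / 2 := hδf (dist_comm y p ▸ hyp.trans_le (min_le_left _ _))
  calc dist z (f y) ≤ dist z (f p) + dist (f p) (f y) := dist_triangle _ _ _
    _ < Δ := by linarith [hzp.trans_le (min_le_right δ (Δ / 2))]

theorem statement7_general {G X : Type} [Group G] [MetricSpace X] [CompactSpace X]
    [MulAction G X]
    (Δ : ℝ) (hΔ : 0 < Δ)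
    (hexp : ∀ x y : X, (∀ g : G, dist (g • x) (g • y) ≤ Δ) → x = y)
    (f : X → X) (hf : Continuous f)
    (hfeq : ∀ (g : G) (x : X), f (g • x) = g • f x) :
    ∃ ε₀ : ℝ, 0 < ε₀ ∧ ∀ ε : ℝ, 0 < ε → ε ≤ ε₀ →
      ∀ (I : Type) (A : I → Set G) (p : I → X),
        (∀ g : G, ∃! i : I, g ∈ A i) →
        ∀ y z : X,
          (∀ i : I, ∀ g ∈ A i, dist (g • y) (g • p i) < ε) →
          (∀ i : I, ∀ g ∈ A i, dist (g • z) (g • f (p i)) < ε) →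
          z = f y := by
  obtain ⟨ε₀, hε₀, hclose⟩ :=
    (CompactSpace.uniformContinuous_of_continuous hf).exists_pos_dist_lt_of_dist_lt hΔ
  refine ⟨ε₀, hε₀, fun ε _ hεle I A p hpart y z hy hz => hexp z (f y) fun g => ?_⟩
  obtain ⟨i, hi, -⟩ := hpart g
  have hfy := hclose (g • y) (g • p i) (g • z) ((hy i g hi).trans_le hεle)
    (hfeq g (p i) ▸ (hz i g hi).trans_le hεle)
  exact (hfeq g y ▸ hfy).le

/-- in an expansive pointed system with an endomorphism `f`, there is
`ε₀ > 0` (depending only on the system and `f`) such that for every `0 < ε ≤ ε₀` and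
every designation `(A_i, p_i)`: if `y` is an `ε`-realization of `(A_i, p_i)` and `z`
is an `ε`-realization of `(A_i, f(p_i))`, then `z = f(y)`. -/
theorem statement7 {G X : Type} [Group G] [MetricSpace X] [CompactSpace X]
    [MulAction G X]
    (hcont : ∀ g : G, Continuous fun x : X => g • x)
    (x₀ : X) (hx₀ : ∀ g : G, g • x₀ = x₀)
    (Δ : ℝ) (hΔ : 0 < Δ)
    (hexp : ∀ x y : X, (∀ g : G, dist (g • x) (g • y) ≤ Δ) → x = y)
    (f : X → X) (hf : Continuous f) (hf₀ : f x₀ = x₀)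
    (hfeq : ∀ (g : G) (x : X), f (g • x) = g • f x) :
    ∃ ε₀ : ℝ, 0 < ε₀ ∧ ∀ ε : ℝ, 0 < ε → ε ≤ ε₀ →
      ∀ (I : Type) (A : I → Set G) (p : I → X),
        (∀ g : G, ∃! i : I, g ∈ A i) →
        ∀ y z : X,
          (∀ i : I, ∀ g ∈ A i, dist (g • y) (g • p i) < ε) →
          (∀ i : I, ∀ g ∈ A i, dist (g • z) (g • f (p i)) < ε) →
          z = f y :=
  statement7_general Δ hΔ hexp f hf hfeq
end

section
/- Let X be a compact metric space with a distinguished point 0 ∈ X, and let f : X → X be a continuous function such that fⁿ(x) → 0 as n → ∞ for every x ∈ X. Then for each ε > 0 there exists n ∈ ℕ such that for all x ∈ X there is some k ≤ n with d(f^k(x), 0) < ε. -/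
open Set Metric

theorem IsCompact.exists_subset_accumulate {X ι : Type*} [TopologicalSpace X] [Preorder ι]
    [IsDirectedOrder ι] [Nonempty ι] {s : Set X} (hs : IsCompact s) {U : ι → Set X}
    (hU : ∀ i, IsOpen (U i)) (hsU : s ⊆ ⋃ i, U i) : ∃ i, s ⊆ accumulate U i :=
  hs.elim_directed_cover _ (fun _ => isOpen_biUnion fun j _ => hU j)
    (iUnion_accumulate (s := U) ▸ hsU) monotone_accumulate.directed_le

/-- if `f` is a continuous self-map of a compact metric space with
distinguished point `x₀` and `fⁿ(x) → x₀` for every `x`, then for each `ε > 0`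
there is `n` such that every orbit visits the `ε`-ball around `x₀` within `n` steps. -/
theorem statement8 {X : Type} [MetricSpace X] [CompactSpace X]
    (x₀ : X) (f : X → X) (hf : Continuous f)
    (hAN : ∀ x : X, Filter.Tendsto (fun n => f^[n] x) Filter.atTop (nhds x₀))
    (ε : ℝ) (hε : 0 < ε) :
    ∃ n : ℕ, ∀ x : X, ∃ k ≤ n, dist (f^[k] x) x₀ < ε := by
  have hcover : univ ⊆ ⋃ k, f^[k] ⁻¹' ball x₀ ε := fun x _ =>
    mem_iUnion.2 ((hAN x).eventually (ball_mem_nhds x₀ hε)).exists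
  obtain ⟨n, hn⟩ := isCompact_univ.exists_subset_accumulate
    (fun k => isOpen_ball.preimage (hf.iterate k)) hcover
  exact ⟨n, fun x => by simpa [mem_accumulate] using hn (mem_univ x)⟩
end

section
/- Every finitely generated group G possessing a finite normal subgroup K ⊴ G such that the quotient G/K has an abelian subgroup of finite index, has a finite-index subgroup isomorphic to ℤ^d for some d ∈ ℕ. -/
/-!
Let `H` be the preimage in `G` of a finite-index abelian subgroup of `G ⧸ K`. Then `H` has finite
index, so it is finitely generated, and every commutator of `H` lies in the finite group `K`.
A finitely generated group with finitely many commutators has a centre of finite index, since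
the coset of `g` modulo the centre is determined by the commutators `⁅g, s⁆` with the finitely
many generators `s`. The centre of `H` is a finitely generated
abelian group, hence `ℤ^d × F` with `F` finite, and `ℤ^d` has finite index in it.
-/

open Subgroup
open scoped commutatorElement IsMulCommutative

def HasFiniteIndexSubgroupIso (G X : Type*) [Group G] [Group X] : Prop :=
  ∃ H : Subgroup G, H.FiniteIndex ∧ Nonempty (H ≃* X)

namespace HasFiniteIndexSubgroupIso

variable {G G' X Y : Type*} [Group G] [Group G'] [Group X] [Group Y]

theorem refl (G : Type*) [Group G] : HasFiniteIndexSubgroupIso G G :=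
  ⟨⊤, inferInstance, ⟨topEquiv⟩⟩

theorem trans_mulEquiv (h : HasFiniteIndexSubgroupIso G X) (e : X ≃* Y) :
    HasFiniteIndexSubgroupIso G Y :=
  let ⟨H, hH, ⟨e'⟩⟩ := h
  ⟨H, hH, ⟨e'.trans e⟩⟩

theorem map (h : HasFiniteIndexSubgroupIso G X) {f : G →* G'} (hf : Function.Injective f)
    [f.range.FiniteIndex] : HasFiniteIndexSubgroupIso G' X := by
  obtain ⟨H, hH, ⟨e⟩⟩ := h
  refine ⟨H.map f, ⟨?_⟩, ⟨(equivMapOfInjective H f hf).symm.trans e⟩⟩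
  rw [H.index_map_of_injective hf]
  exact mul_ne_zero hH.index_ne_zero FiniteIndex.index_ne_zero

theorem of_mulEquiv (h : HasFiniteIndexSubgroupIso G X) (e : G ≃* G') :
    HasFiniteIndexSubgroupIso G' X := by
  have : (e : G →* G').range.FiniteIndex := by
    rw [MonoidHom.range_eq_top_of_surjective _ e.surjective]
    infer_instance
  exact h.map (f := (e : G →* G')) e.injective

theorem of_finiteIndex {H : Subgroup G} [H.FiniteIndex] (h : HasFiniteIndexSubgroupIso H X) :
    HasFiniteIndexSubgroupIso G X := by
  have : H.subtype.range.FiniteIndex := by rwa [range_subtype]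
  exact h.map H.subtype_injective

theorem prod_finite (X F : Type*) [Group X] [Group F] [Finite F] :
    HasFiniteIndexSubgroupIso (X × F) X := by
  have hrange : (MonoidHom.inl X F).range = (MonoidHom.snd X F).ker := by
    ext ⟨a, b⟩
    simp [eq_comm, mem_prod]
  have : (MonoidHom.inl X F).range.FiniteIndex := by
    rw [hrange]
    infer_instance
  exact (refl X).map (f := MonoidHom.inl X F) fun a b h => congrArg Prod.fst h

end HasFiniteIndexSubgroupIso

theorem CommGroup.exists_hasFiniteIndexSubgroupIso_int (W : Type*) [CommGroup W] [Group.FG W] :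
    ∃ d, HasFiniteIndexSubgroupIso W (Multiplicative (Fin d → ℤ)) := by
  obtain ⟨ι, J, _, _, p, hp, e, ⟨f⟩⟩ := CommGroup.equiv_free_prod_prod_multiplicative_zmod W
  have : ∀ i, NeZero (p i ^ e i) := fun i => ⟨pow_ne_zero _ (hp i).ne_zero⟩
  have hfree : HasFiniteIndexSubgroupIso W (J → Multiplicative ℤ) :=
    (HasFiniteIndexSubgroupIso.prod_finite _ _).of_mulEquiv f.symm
  exact ⟨Fintype.card J, hfree.trans_mulEquiv <|
    (MulEquiv.arrowCongr (Fintype.equivFin J) (MulEquiv.refl _)).trans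
      (MulEquiv.piMultiplicative _).symm⟩

theorem QuotientGroup.commutatorElement_mem_of_commute {G : Type*} [Group G] {K : Subgroup G}
    [K.Normal] {x y : G} (h : Commute (x : G ⧸ K) y) : ⁅x, y⁆ ∈ K := by
  rw [← QuotientGroup.eq_one_iff, ← QuotientGroup.mk'_apply, map_commutatorElement]
  exact commutatorElement_eq_one_iff_commute.mpr h

theorem Subgroup.finite_commutatorSet_of_commutatorElement_mem {G : Type*} [Group G]
    {H K : Subgroup G} [Finite K] (h : ∀ x ∈ H, ∀ y ∈ H, ⁅x, y⁆ ∈ K) :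
    Finite (commutatorSet H) := by
  have hsub : commutatorSet H ⊆ Subtype.val ⁻¹' (K : Set G) := by
    rintro _ ⟨x, y, rfl⟩
    exact h x x.2 y y.2
  exact (((K : Set G).toFinite.preimage Subtype.val_injective.injOn).subset hsub).to_subtype

/-- a finitely generated group with a finite normal subgroup `K` such
that `G/K` is virtually abelian has a finite-index subgroup isomorphic to `ℤ^d` for
some `d`. -/
theorem statement10 {G : Type} [Group G] (hFG : Group.FG G)
    (K : Subgroup G) [K.Normal] (hKfin : Finite K)
    (hQ : ∃ A : Subgroup (G ⧸ K), A.FiniteIndex ∧ ∀ x y : A, x * y = y * x) :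
    ∃ (d : ℕ) (H : Subgroup G), H.FiniteIndex ∧
      Nonempty (H ≃* Multiplicative (Fin d → ℤ)) := by
  obtain ⟨A, hA, hAcomm⟩ := hQ
  set H := A.comap (QuotientGroup.mk' K)
  have : H.FiniteIndex :=
    ⟨by rw [index_comap_of_surjective _ (QuotientGroup.mk'_surjective K)]; exact hA.index_ne_zero⟩
  have : Finite (commutatorSet H) :=
    finite_commutatorSet_of_commutatorElement_mem fun x hx y hy =>
      QuotientGroup.commutatorElement_mem_of_commute
        (congrArg Subtype.val (hAcomm ⟨_, hx⟩ ⟨_, hy⟩))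
  obtain ⟨d, hd⟩ := CommGroup.exists_hasFiniteIndexSubgroupIso_int (center H)
  exact ⟨d, hd.of_finiteIndex.of_finiteIndex⟩
end

section
/- Say a group G is nil-rigid if for every expansive 0-gluing pointed dynamical system (G, X, 0) in which the homoclinic points are dense, every asymptotically nilpotent endomorphism of (G, X, 0) is nilpotent. Let H ≤ G be groups such that the set of left cosets of H in G is at most countable. If G is nil-rigid, then so is H. -/
/-- A point `x` is homoclinic: `g • x` is eventually close to `x₀` outside finite
subsets of `G`. -/
def Homoclinic (G : Type) [Group G] {X : Type} [MetricSpace X] [MulAction G X]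
    (x₀ x : X) : Prop :=
  ∀ ε : ℝ, 0 < ε → ∃ E : Finset G, ∀ g : G, g ∉ E → dist (g • x) x₀ < ε

/-- A group `G` is nil-rigid if for every expansive `0`-gluing pointed dynamical
system `(G, X, 0)` with dense homoclinic points, every asymptotically nilpotent
endomorphism is nilpotent. -/
def NilRigid (G : Type) [Group G] : Prop :=
  ∀ (X : Type) (_ : MetricSpace X) (_ : CompactSpace X) (_ : MulAction G X),
    (∀ g : G, Continuous fun x : X => g • x) →
    ∀ x₀ : X, (∀ g : G, g • x₀ = x₀) →
    (∃ Δ : ℝ, 0 < Δ ∧ ∀ x y : X, (∀ g : G, dist (g • x) (g • y) ≤ Δ) → x = y) →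
    ZeroGluing G x₀ →
    Dense {x : X | Homoclinic G x₀ x} →
    ∀ f : X → X, Continuous f → f x₀ = x₀ →
    (∀ (g : G) (x : X), f (g • x) = g • f x) →
    (∀ x : X, Filter.Tendsto (fun n => f^[n] x) Filter.atTop (nhds x₀)) →
    ∃ n : ℕ, ∀ x : X, f^[n] x = x₀

/-!
Let `G` act by left translation on the coinduced space `Coinduced H X` of maps `y : G → X` with
`y (k * h) = h⁻¹ • y k`. Restriction to a transversal identifies it with `G ⧸ H → X`, so it is
compact and metrizable because `G ⧸ H` is countable, and its uniformity is that of pointwise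
convergence on `G`. Expansivity, `0`-gluing (designations are glued coset by coset) and density of
homoclinic points (finitely many homoclinic coordinates, all others `x₀`) pass from `(H, X, x₀)`
to `(G, Coinduced H X, const x₀)`. An asymptotically nilpotent `f` acts coordinatewise as an
asymptotically nilpotent endomorphism of the coinduced system; nil-rigidity of `G` makes this
nilpotent, and reading off one coordinate shows that `f` is nilpotent.
-/

open Filter Topology Uniformity

theorem homoclinic_iff_tendsto {G : Type} [Group G] {X : Type} [MetricSpace X] [MulAction G X]
    {x₀ x : X} : Homoclinic G x₀ x ↔ Tendsto (fun g : G => g • x) cofinite (𝓝 x₀) := by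
  rw [Metric.tendsto_nhds]
  refine forall₂_congr fun ε _ => ⟨fun ⟨E, hE⟩ => ?_, fun h => ?_⟩
  · exact eventually_cofinite.2 <|
      E.finite_toSet.subset fun g hg => by_contra fun hgE => hg (hE g hgE)
  · exact ⟨(eventually_cofinite.1 h).toFinset, fun g hg => by simpa using hg⟩

theorem homoclinic_self {G : Type} [Group G] {X : Type} [MetricSpace X] [MulAction G X]
    {x₀ : X} (hx₀ : ∀ g : G, g • x₀ = x₀) : Homoclinic G x₀ x₀ :=
  fun ε hε => ⟨∅, fun g _ => by simpa [hx₀] using hε⟩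

def DesignationsRealizable (G : Type) [Group G] {X : Type} [MetricSpace X] [MulAction G X]
    (x₀ : X) (δ : ℝ) (E : Finset G) (ε : ℝ) : Prop :=
  ∀ (I : Type) (A : I → Set G) (p : I → X),
    (∀ g : G, ∃! i : I, g ∈ A i) →
    (∀ i : I, ∀ g ∈ A i, (∃ e ∈ E, e * g ∉ A i) → dist (g • p i) x₀ < δ) →
    ∃ y : X, ∀ i : I, ∀ g ∈ A i, dist (g • y) (g • p i) < ε

theorem zeroGluing_iff {G : Type} [Group G] {X : Type} [MetricSpace X] [MulAction G X] {x₀ : X} :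
    ZeroGluing G x₀ ↔ ∀ ε > 0, ∃ δ > 0, ∃ E, DesignationsRealizable G x₀ δ E ε :=
  Iff.rfl

theorem Pi.uniformity_basis_dist {ι α : Type*} [PseudoMetricSpace α] :
    (𝓤 (ι → α)).HasBasis (fun p : Finset ι × ℝ => 0 < p.2)
      fun p => {xy | ∀ i ∈ p.1, dist (xy.1 i) (xy.2 i) < p.2} := by
  have h := HasBasis.iInf' fun i : ι =>
    (Metric.uniformity_basis_dist (α := α)).comap fun xy : (ι → α) × (ι → α) => (xy.1 i, xy.2 i)
  rw [← Pi.uniformity] at h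
  refine h.to_hasBasis (fun ⟨I, r⟩ ⟨hI, hr⟩ => ?_) fun ⟨F, η⟩ hη =>
    ⟨(F, fun _ => η), ⟨F.finite_toSet, fun _ _ => hη⟩, fun xy hxy => ?_⟩
  · rcases I.eq_empty_or_nonempty with rfl | hne
    · exact ⟨(∅, 1), one_pos, by simp⟩
    obtain ⟨j, hj, hmin⟩ := Set.exists_min_image I r hI hne
    refine ⟨(hI.toFinset, r j), hr j hj, fun xy hxy => Set.mem_iInter₂.2 fun i hi => ?_⟩
    exact (hxy i (hI.mem_toFinset.2 hi)).trans_le (hmin i hi)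
  · simpa using hxy

theorem dense_setOf_forall_mem_and_finite_ne {ι Y : Type*} [TopologicalSpace Y] {S : Set Y}
    (hS : Dense S) {y₀ : Y} (hy₀ : y₀ ∈ S) :
    Dense {f : ι → Y | (∀ i, f i ∈ S) ∧ {i | f i ≠ y₀}.Finite} := by
  classical
  refine dense_iff_inter_open.2 fun U hU ⟨f, hfU⟩ => ?_
  obtain ⟨I, u, hu, hIU⟩ := isOpen_pi_iff.1 hU f hfU
  have hpick : ∀ i ∈ I, ∃ s ∈ u i, s ∈ S := fun i hi =>
    hS.inter_open_nonempty _ (hu i hi).1 ⟨f i, (hu i hi).2⟩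
  choose s hsu hsS using hpick
  refine ⟨fun i => if hi : i ∈ I then s i hi else y₀, hIU fun i hi => ?_, fun i => ?_,
    I.finite_toSet.subset fun i hi => ?_⟩
  · rw [Finset.mem_coe] at hi
    simpa [hi] using hsu i hi
  · by_cases hi : i ∈ I <;> simp [hi, hsS, hy₀]
  · obtain ⟨hiI, -⟩ : ∃ hiI : i ∈ I, s i hiI ≠ y₀ := by simpa using hi
    exact hiI

namespace QuotientGroup

variable {G : Type} [Group G] (H : Subgroup G)

noncomputable def cosetOffset (k : G) : H :=
  ⟨k⁻¹ * (k : G ⧸ H).out, QuotientGroup.eq.mp (QuotientGroup.out_eq' (k : G ⧸ H)).symm⟩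

variable {H}

theorem mul_cosetOffset (k : G) : k * cosetOffset H k = (k : G ⧸ H).out :=
  mul_inv_cancel_left k _

theorem cosetOffset_mul_out_inv (k : G) : (cosetOffset H k : G) * (k : G ⧸ H).out⁻¹ = k⁻¹ := by
  rw [← mul_cosetOffset k, mul_inv_rev, mul_inv_cancel_left]

theorem cosetOffset_out (c : G ⧸ H) : cosetOffset H c.out = 1 :=
  Subtype.ext <| by simp [cosetOffset]

theorem cosetOffset_mul_coe (k : G) (h : H) : cosetOffset H (k * h) = h⁻¹ * cosetOffset H k :=
  Subtype.ext <| by simp [cosetOffset, QuotientGroup.mk_mul_of_mem k h.2, mul_assoc]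

theorem mk_cosetOffset_injective :
    Function.Injective fun k : G => ((k : G ⧸ H), cosetOffset H k) := by
  intro a b hab
  simp only [Prod.mk.injEq] at hab
  rw [← mul_inv_eq_of_eq_mul (mul_cosetOffset a).symm,
    ← mul_inv_eq_of_eq_mul (mul_cosetOffset b).symm, hab.1, hab.2]

end QuotientGroup

open QuotientGroup

@[ext]
structure Coinduced {G : Type} [Group G] (H : Subgroup G) (X : Type) [MulAction H X] : Type where
  val : G → X
  val_mul_coe : ∀ (k : G) (h : H), val (k * h) = h⁻¹ • val k

namespace Coinduced

variable {G : Type} [Group G] {H : Subgroup G} {X : Type} [MulAction H X]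

instance : MulAction G (Coinduced H X) where
  smul g y := ⟨fun k => y.val (g⁻¹ * k), fun k h => by rw [← mul_assoc, y.val_mul_coe]⟩
  one_smul y := by ext k; exact congr_arg y.val (by group)
  mul_smul a b y := by ext k; exact congr_arg y.val (by group)

@[simp]
theorem smul_val (g : G) (y : Coinduced H X) (k : G) : (g • y).val k = y.val (g⁻¹ * k) := rfl

theorem smul_val_eq_val_mul_inv (y : Coinduced H X) (k : G) (h : H) :
    h • y.val k = y.val (k * (h⁻¹ : H)) := by
  rw [y.val_mul_coe, inv_inv]

noncomputable def res (y : Coinduced H X) (c : G ⧸ H) : X := y.val c.out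

theorem val_eq_smul_res (y : Coinduced H X) (k : G) : y.val k = cosetOffset H k • y.res k := by
  rw [res, ← mul_cosetOffset, y.val_mul_coe, smul_inv_smul]

noncomputable def ofRes (f : G ⧸ H → X) : Coinduced H X where
  val k := cosetOffset H k • f k
  val_mul_coe k h := by
    rw [cosetOffset_mul_coe, mul_smul, QuotientGroup.mk_mul_of_mem k h.2]

@[simp]
theorem ofRes_val_out (f : G ⧸ H → X) (c : G ⧸ H) : (ofRes f).val c.out = f c := by
  simp [ofRes, cosetOffset_out]

@[simp]
theorem ofRes_res (y : Coinduced H X) : ofRes y.res = y := by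
  ext k
  exact (val_eq_smul_res y k).symm

theorem res_injective : Function.Injective (res : Coinduced H X → G ⧸ H → X) :=
  Function.LeftInverse.injective ofRes_res

theorem ofRes_surjective : Function.Surjective (ofRes : (G ⧸ H → X) → Coinduced H X) :=
  Function.RightInverse.surjective ofRes_res

def const (x : X) (hx : ∀ h : H, h • x = x) : Coinduced H X :=
  ⟨fun _ => x, fun _ h => (hx h⁻¹).symm⟩

@[simp]
theorem const_val {x : X} (hx : ∀ h : H, h • x = x) (k : G) : (const x hx).val k = x := rfl

theorem smul_const (g : G) {x : X} (hx : ∀ h : H, h • x = x) : g • const x hx = const x hx :=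
  rfl

def map (f : X → X) (hf : ∀ (h : H) (x : X), f (h • x) = h • f x) (y : Coinduced H X) :
    Coinduced H X :=
  ⟨fun k => f (y.val k), fun k h => by rw [y.val_mul_coe, hf]⟩

variable {f : X → X} {hf : ∀ (h : H) (x : X), f (h • x) = h • f x}

theorem map_smul (g : G) (y : Coinduced H X) : map f hf (g • y) = g • map f hf y := rfl

theorem map_const {x : X} (hx : ∀ h : H, h • x = x) (hfx : f x = x) :
    map f hf (const x hx) = const x hx := by
  ext k
  exact hfx

theorem iterate_map_val (n : ℕ) (y : Coinduced H X) (k : G) :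
    ((map f hf)^[n] y).val k = f^[n] (y.val k) := by
  induction n generalizing y with
  | zero => rfl
  | succ n ih => exact ih (map f hf y)

theorem exists_dist_val_lt_of_designation [MetricSpace X] {x₀ : X} {δ ε : ℝ} {E : Finset H}
    (hX : DesignationsRealizable H x₀ δ E ε) {I : Type} {A : I → Set G}
    (hpart : ∀ g, ∃! i, g ∈ A i) {p : I → Coinduced H X}
    (hborder : ∀ i, ∀ g ∈ A i, ∀ e ∈ E, (e : G) * g ∉ A i → dist ((p i).val g⁻¹) x₀ < δ) :
    ∃ y : Coinduced H X, ∀ i m, m⁻¹ ∈ A i → dist (y.val m) ((p i).val m) < ε := by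
  have hcoset : ∀ c : G ⧸ H, ∃ x : X, ∀ i, ∀ h : H, (h : G) * c.out⁻¹ ∈ A i →
      dist (h • x) (h • (p i).res c) < ε := fun c =>
    hX I (fun i => {h : H | (h : G) * c.out⁻¹ ∈ A i}) (fun i => (p i).res c)
      (fun h => hpart _) fun i h hh ⟨e, he, hout⟩ => by
        have := hborder i _ hh e he (by simpa [mul_assoc] using hout)
        rw [res, smul_val_eq_val_mul_inv, Subgroup.coe_inv]
        simpa using this
  choose x hx using hcoset
  refine ⟨ofRes x, fun i m hm => ?_⟩
  rw [val_eq_smul_res (p i) m]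
  exact hx _ i _ (by rwa [cosetOffset_mul_out_inv])

section Metric

variable [MetricSpace X] [Countable (G ⧸ H)]

noncomputable instance : MetricSpace (Coinduced H X) :=
  letI := Encodable.ofCountable (G ⧸ H)
  MetricSpace.induced res res_injective PiCountable.metricSpace

theorem isUniformInducing_res : IsUniformInducing (res : Coinduced H X → G ⧸ H → X) := ⟨rfl⟩

variable [CompactSpace X] [ContinuousConstSMul H X]

theorem isUniformInducing_val : IsUniformInducing (val : Coinduced H X → G → X) := by
  refine .of_comp ?_ (Pi.uniformContinuous_precomp Quotient.out) isUniformInducing_res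
  refine uniformContinuous_pi.2 fun k => ?_
  have := ((CompactSpace.uniformContinuous_of_continuous
    (continuous_const_smul (T := X) (cosetOffset H k))).comp
    (Pi.uniformContinuous_proj _ (k : G ⧸ H))).comp isUniformInducing_res.uniformContinuous
  simpa only [Function.comp_def, ← val_eq_smul_res] using this

theorem isInducing_val : IsInducing (val : Coinduced H X → G → X) :=
  isUniformInducing_val.isInducing

theorem tendsto_nhds_iff {ι : Type*} {l : Filter ι} {u : ι → Coinduced H X}
    {y : Coinduced H X} :
    Tendsto u l (𝓝 y) ↔ ∀ k, Tendsto (fun i => (u i).val k) l (𝓝 (y.val k)) :=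
  isInducing_val.tendsto_nhds_iff.trans tendsto_pi_nhds

theorem continuous_iff {Y : Type*} [TopologicalSpace Y] {u : Y → Coinduced H X} :
    Continuous u ↔ ∀ k, Continuous fun y => (u y).val k :=
  isInducing_val.continuous_iff.trans continuous_pi_iff

theorem continuous_val_apply (k : G) : Continuous fun y : Coinduced H X => y.val k :=
  (continuous_apply k).comp isInducing_val.continuous

theorem uniformContinuous_val_apply (k : G) :
    UniformContinuous fun y : Coinduced H X => y.val k :=
  (Pi.uniformContinuous_proj _ k).comp isUniformInducing_val.uniformContinuous

theorem uniformity_basis_dist :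
    (𝓤 (Coinduced H X)).HasBasis (fun p : Finset G × ℝ => 0 < p.2)
      fun p => {yz | ∀ k ∈ p.1, dist (yz.1.val k) (yz.2.val k) < p.2} :=
  isUniformInducing_val.basis_uniformity Pi.uniformity_basis_dist

instance : ContinuousConstSMul G (Coinduced H X) :=
  ⟨fun g => continuous_iff.2 fun k => continuous_val_apply (g⁻¹ * k)⟩

instance : CompactSpace (Coinduced H X) := by
  have hrange : Set.range (val : Coinduced H X → G → X) =
      ⋂ (k : G) (h : H), {y | y (k * h) = h⁻¹ • y k} := by
    ext y
    simp only [Set.mem_range, Set.mem_iInter, Set.mem_ofPred_eq]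
    exact ⟨fun ⟨y', hy'⟩ => hy' ▸ y'.val_mul_coe, fun hy => ⟨⟨y, hy⟩, rfl⟩⟩
  refine IsClosedEmbedding.compactSpace (f := val)
    ⟨⟨isInducing_val, fun _ _ => Coinduced.ext⟩, ?_⟩
  rw [hrange]
  exact isClosed_iInter fun k => isClosed_iInter fun _ =>
    isClosed_eq (continuous_apply _) ((continuous_const_smul _).comp (continuous_apply k))

theorem continuous_ofRes : Continuous (ofRes : (G ⧸ H → X) → Coinduced H X) :=
  continuous_iff.2 fun k =>
    (continuous_const_smul (cosetOffset H k)).comp (continuous_apply (k : G ⧸ H))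

theorem continuous_map (hfc : Continuous f) : Continuous (map f hf) :=
  continuous_iff.2 fun k => hfc.comp (continuous_val_apply k)

theorem tendsto_iterate_map {x₀ : X} (hx₀ : ∀ h : H, h • x₀ = x₀)
    (hnil : ∀ x, Tendsto (fun n => f^[n] x) atTop (𝓝 x₀)) (y : Coinduced H X) :
    Tendsto (fun n => (map f hf)^[n] y) atTop (𝓝 (const x₀ hx₀)) :=
  tendsto_nhds_iff.2 fun k => by
    simpa only [iterate_map_val, const_val] using hnil (y.val k)

theorem homoclinic_ofRes {x₀ : X} (hx₀ : ∀ h : H, h • x₀ = x₀) {f : G ⧸ H → X}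
    (hf : ∀ c, Homoclinic H x₀ (f c)) (hfin : {c | f c ≠ x₀}.Finite) :
    Homoclinic G (const x₀ hx₀) (ofRes f) := by
  have hpair : Tendsto (fun p : (G ⧸ H) × H => p.2 • f p.1) cofinite (𝓝 x₀) := by
    intro U hU
    refine (hfin.biUnion fun c _ =>
      (Set.finite_singleton c).prod (homoclinic_iff_tendsto.1 (hf c) hU)).subset ?_
    rintro ⟨c, h⟩ hcU
    have hc : f c ≠ x₀ := fun hc => hcU (by simpa [hc, hx₀] using mem_of_mem_nhds hU)
    exact Set.mem_biUnion hc ⟨rfl, hcU⟩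
  have hval : Tendsto (ofRes f).val cofinite (𝓝 x₀) :=
    hpair.comp mk_cosetOffset_injective.tendsto_cofinite
  rw [homoclinic_iff_tendsto, tendsto_nhds_iff]
  exact fun k => hval.comp ((mul_left_injective k).comp inv_injective).tendsto_cofinite

theorem dense_setOf_homoclinic {x₀ : X} (hx₀ : ∀ h : H, h • x₀ = x₀)
    (hdense : Dense {x : X | Homoclinic H x₀ x}) :
    Dense {y : Coinduced H X | Homoclinic G (const x₀ hx₀) y} := by
  have hD := dense_setOf_forall_mem_and_finite_ne (ι := G ⧸ H) hdense (homoclinic_self hx₀)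
  refine (ofRes_surjective.denseRange.dense_image continuous_ofRes hD).mono ?_
  rintro _ ⟨f, ⟨hf, hfin⟩, rfl⟩
  exact homoclinic_ofRes hx₀ hf hfin

theorem expansive {Δ : ℝ} (hΔ : 0 < Δ)
    (hexp : ∀ x y : X, (∀ h : H, dist (h • x) (h • y) ≤ Δ) → x = y) :
    ∃ Δ' : ℝ, 0 < Δ' ∧ ∀ y z : Coinduced H X, (∀ g : G, dist (g • y) (g • z) ≤ Δ') → y = z := by
  obtain ⟨δ, hδ, hval⟩ := Metric.uniformContinuous_iff.1
    (uniformContinuous_val_apply (H := H) (X := X) 1) Δ hΔ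
  refine ⟨δ / 2, half_pos hδ, fun y z hyz =>
    Coinduced.ext (funext fun k => hexp _ _ fun h => ?_)⟩
  have := hval ((hyz (k * (h⁻¹ : H))⁻¹).trans_lt (half_lt_self hδ))
  rw [smul_val_eq_val_mul_inv, smul_val_eq_val_mul_inv]
  simpa using this.le

theorem zeroGluing {x₀ : X} (hx₀ : ∀ h : H, h • x₀ = x₀) (hglue : ZeroGluing H x₀) :
    ZeroGluing G (const x₀ hx₀) := by
  classical
  refine zeroGluing_iff.2 fun ε hε => ?_
  have hB := uniformity_basis_dist (H := H) (X := X)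
  obtain ⟨⟨F, η⟩, hη, hFη⟩ := hB.mem_iff.1 (Metric.dist_mem_uniformity hε)
  obtain ⟨δX, hδX, EX, hEX⟩ := zeroGluing_iff.1 hglue (η / 3) (by positivity)
  obtain ⟨δ, hδ, hδF⟩ := Metric.mem_uniformity_dist.1 (hB.mem_of_mem
    (i := (insert 1 F, min δX (η / 3))) (lt_min hδX (by positivity)))
  set E := EX.image Subtype.val ∪ F ∪ F.image (·⁻¹)
  refine ⟨δ, hδ, E, fun I A p hpart hborder => ?_⟩
  have hsmall : ∀ i, ∀ g ∈ A i, ∀ e ∈ E, e * g ∉ A i →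
      ∀ k ∈ insert 1 F, dist ((p i).val (g⁻¹ * k)) x₀ < min δX (η / 3) :=
    fun i g hg e he hout => hδF (hborder i g hg ⟨e, he, hout⟩)
  obtain ⟨y, hy⟩ := exists_dist_val_lt_of_designation hEX hpart (p := p)
    fun i g hg e he hout => by
      have := hsmall i g hg e (by simp [E, he]) hout 1 (by simp)
      simpa using (lt_min_iff.1 this).1
  refine ⟨y, fun i g hg => @hFη (g • y, g • p i) fun k hk => ?_⟩
  change dist (y.val (g⁻¹ * k)) ((p i).val (g⁻¹ * k)) < η
  set m := g⁻¹ * k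
  obtain ⟨i₀, hi₀, -⟩ := hpart m⁻¹
  by_cases hii : i₀ = i
  · subst hii
    exact (hy i₀ m hi₀).trans (by linarith)
  -- Then `g` is on the `E`-border of `A i` and `m⁻¹` on that of `A i₀`: both `p i` and `p i₀`
  -- are near `x₀` at `m`, and `y` is near `p i₀` there.
  have hg₀ : g ∉ A i₀ := fun hg₀ => hii ((hpart g).unique hg₀ hg)
  have hm : m⁻¹ ∉ A i := fun hm => hii ((hpart _).unique hi₀ hm)
  have h₀ : dist ((p i₀).val m) x₀ < η / 3 := by
    have := hsmall i₀ m⁻¹ hi₀ k (by simp [E, hk]) (by simpa [m] using hg₀) 1 (by simp)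
    simpa using (lt_min_iff.1 this).2
  have h₁ : dist ((p i).val m) x₀ < η / 3 := by
    have := hsmall i g hg k⁻¹ (by simp [E, hk]) (by simpa [m] using hm) k (by simp [hk])
    exact (lt_min_iff.1 this).2
  calc dist (y.val m) ((p i).val m)
      ≤ dist (y.val m) ((p i₀).val m) + dist ((p i₀).val m) x₀ + dist x₀ ((p i).val m) :=
        dist_triangle4 _ _ _ _
    _ < η / 3 + η / 3 + η / 3 := by
        rw [dist_comm x₀]
        gcongr
        exact hy i₀ m hi₀
    _ = η := by ring

end Metric

end Coinduced

/-- nil-rigidity passes to subgroups with at most countably many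
cosets. -/
theorem statement16 {G : Type} [Group G] (H : Subgroup G)
    (hcount : Countable (G ⧸ H)) (hG : NilRigid G) :
    NilRigid H := by
  intro X _ _ _ hcont x₀ hx₀ ⟨Δ, hΔ, hexp⟩ hglue hdense f hfc hf₀ hfeq hfnil
  have : ContinuousConstSMul H X := ⟨hcont⟩
  obtain ⟨n, hn⟩ := hG (Coinduced H X) inferInstance inferInstance inferInstance
    continuous_const_smul (Coinduced.const x₀ hx₀) (fun g => Coinduced.smul_const g hx₀)
    (Coinduced.expansive hΔ hexp) (Coinduced.zeroGluing hx₀ hglue)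
    (Coinduced.dense_setOf_homoclinic hx₀ hdense) (Coinduced.map f hfeq)
    (Coinduced.continuous_map hfc) (Coinduced.map_const hx₀ hf₀) Coinduced.map_smul
    (Coinduced.tendsto_iterate_map hx₀ hfnil)
  refine ⟨n, fun x => ?_⟩
  have := congr_arg (fun y => y.val (Quotient.out ((1 : G) : G ⧸ H)))
    (hn (Coinduced.ofRes fun _ => x))
  simpa [Coinduced.iterate_map_val] using this
end

section
/- Say a group G is nil-rigid if for every expansive 0-gluing pointed dynamical system (G, X, 0) in which the homoclinic points are dense, every asymptotically nilpotent endomorphism of (G, X, 0) is nilpotent. If a group G has a subgroup H of finite index that is nil-rigid, then G is nil-rigid. -/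
/-!
Choose a finite left transversal `S` of `H` containing `1`, so that every `g : G` factors
uniquely as `g = s * h` with `s ∈ S`, `h ∈ H`. Since the finitely many maps `x ↦ s • x` are
uniformly equicontinuous on the compact space, every `G`-orbit estimate reduces to an
`H`-orbit estimate at a smaller scale. Hence restricting the action to `H` preserves
expansivity, `0`-gluing and homoclinic points, and nil-rigidity of `H` applies to the same endomorphism.
-/

variable {G : Type} [Group G] {X : Type} [MulAction G X]

namespace Subgroup.IsComplement

variable {S : Set G} {H : Subgroup G} (hS : IsComplement S H)
include hS

theorem smul_eq_equiv_fst_smul_equiv_snd_smul (g : G) (x : X) :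
    g • x = ((hS.equiv g).1 : G) • ((hS.equiv g).2 : G) • x := by
  rw [← mul_smul, hS.equiv_fst_mul_equiv_snd]

theorem equiv_snd_mul (a g : G) :
    (hS.equiv (a * g)).2 = (hS.equiv (a * (hS.equiv g).1)).2 * (hS.equiv g).2 := by
  conv_lhs => rw [← hS.equiv_fst_mul_equiv_snd g, ← mul_assoc, hS.equiv_mul_right]

end Subgroup.IsComplement

def IsExpansive (G : Type) [Group G] (X : Type) [MetricSpace X] [MulAction G X] : Prop :=
  ∃ Δ : ℝ, 0 < Δ ∧ ∀ x y : X, (∀ g : G, dist (g • x) (g • y) ≤ Δ) → x = y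

variable [MetricSpace X]

theorem exists_forall_dist_smul_lt_of_finite [CompactSpace X] {S : Set G} (hSfin : S.Finite)
    (hcont : ∀ s ∈ S, Continuous fun x : X => s • x) {ε : ℝ} (hε : 0 < ε) :
    ∃ δ > 0, ∀ x y : X, dist x y < δ → ∀ s ∈ S, dist (s • x) (s • y) < ε := by
  have : Finite S := hSfin.to_subtype
  have hequi : UniformEquicontinuous fun (s : S) (x : X) => (s : G) • x :=
    uniformEquicontinuous_finite.2 fun s =>
      CompactSpace.uniformContinuous_of_continuous (hcont s s.2)
  obtain ⟨δ, hδ, hδε⟩ := Metric.uniformEquicontinuous_iff.1 hequi ε hε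
  exact ⟨δ, hδ, fun x y hxy s hs => hδε x y hxy ⟨s, hs⟩⟩

theorem Homoclinic.subgroup {x₀ x : X} (hx : Homoclinic G x₀ x) (H : Subgroup G) :
    Homoclinic H x₀ x := by
  intro ε hε
  obtain ⟨E, hE⟩ := hx ε hε
  refine ⟨E.preimage (↑) Subtype.coe_injective.injOn, fun h hh => hE h ?_⟩
  rwa [Finset.mem_preimage] at hh

namespace Subgroup.IsComplement

variable {S : Set G} {H : Subgroup G} (hS : IsComplement S H) [CompactSpace X]
  (hSfin : S.Finite) (hcont : ∀ s ∈ S, Continuous fun x : X => s • x)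
include hS hSfin hcont

theorem isExpansive_subgroup (hexp : IsExpansive G X) : IsExpansive H X := by
  obtain ⟨Δ, hΔ, hΔexp⟩ := hexp
  obtain ⟨δ, hδ, hδΔ⟩ := exists_forall_dist_smul_lt_of_finite hSfin hcont hΔ
  refine ⟨δ / 2, half_pos hδ, fun x y hxy => hΔexp x y fun g => ?_⟩
  rw [hS.smul_eq_equiv_fst_smul_equiv_snd_smul g x, hS.smul_eq_equiv_fst_smul_equiv_snd_smul g y]
  exact (hδΔ _ _ ((hxy _).trans_lt (half_lt_self hδ)) _ (hS.equiv g).1.2).le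

/-- An `E`-border point `g = s * h` of the lifted designation `{g | (hS.equiv g).2 ∈ A i}` yields
the border point `h` of `A i` for `E' = {(hS.equiv (e * s)).2 | e ∈ E, s ∈ S}`. -/
theorem zeroGluing_subgroup (hS1 : 1 ∈ S) {x₀ : X} (hfix : ∀ s ∈ S, s • x₀ = x₀)
    (hglue : ZeroGluing G x₀) : ZeroGluing H x₀ := by
  classical
  intro ε hε
  obtain ⟨δ, hδ, E, hE⟩ := hglue ε hε
  obtain ⟨δ', hδ', hδ'δ⟩ := exists_forall_dist_smul_lt_of_finite hSfin hcont hδ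
  refine ⟨δ', hδ', (E ×ˢ hSfin.toFinset).image fun p => (hS.equiv (p.1 * p.2)).2, ?_⟩
  intro I A p hpart hborder
  have hliftBorder : ∀ i, ∀ g ∈ {g | (hS.equiv g).2 ∈ A i},
      (∃ e ∈ E, e * g ∉ {g | (hS.equiv g).2 ∈ A i}) → dist (g • p i) x₀ < δ := by
    rintro i g hg ⟨e, he, hout⟩
    set s := (hS.equiv g).1
    have hE' : dist ((hS.equiv g).2 • p i) x₀ < δ' := by
      refine hborder i _ hg ⟨(hS.equiv (e * s)).2, ?_, ?_⟩
      · exact Finset.mem_image.2 ⟨(e, s), Finset.mem_product.2 ⟨he, by simp⟩, rfl⟩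
      · rwa [Set.mem_ofPred_eq, hS.equiv_snd_mul] at hout
    calc dist (g • p i) x₀ = dist ((s : G) • ((hS.equiv g).2 : G) • p i) ((s : G) • x₀) := by
          rw [← hS.smul_eq_equiv_fst_smul_equiv_snd_smul, hfix s s.2]
      _ < δ := hδ'δ _ _ hE' s s.2
  obtain ⟨y, hy⟩ := hE I (fun i => {g | (hS.equiv g).2 ∈ A i}) p (fun g => hpart _) hliftBorder
  refine ⟨y, fun i h hh => hy i h ?_⟩
  rwa [Set.mem_ofPred_eq, hS.equiv_snd_eq_self_of_mem_of_one_mem hS1 h.2]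

end Subgroup.IsComplement

/-- a group with a nil-rigid subgroup of finite index is nil-rigid. -/
theorem statement17 {G : Type} [Group G] (H : Subgroup G)
    (hfi : H.FiniteIndex) (hH : NilRigid H) :
    NilRigid G := by
  intro X _ _ _ hcont x₀ hfix hexp hglue hdense f hf hf0 heqv hasymp
  obtain ⟨S, hS, hS1⟩ := H.exists_isComplement_left 1
  have hSfin : S.Finite := Set.finite_coe_iff.1 (hS.finite_left_iff.2 hfi)
  have hScont : ∀ s ∈ S, Continuous fun x : X => s • x := fun s _ => hcont s
  exact hH X inferInstance inferInstance inferInstance (fun h => hcont h) x₀ (fun h => hfix h)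
    (hS.isExpansive_subgroup hSfin hScont hexp)
    (hS.zeroGluing_subgroup hSfin hScont hS1 (fun s _ => hfix s) hglue)
    (hdense.mono fun _ hx => Homoclinic.subgroup hx H) f hf hf0 (fun h => heqv h) hasymp
end
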